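/- For every f ∈ H₀^{2,2}((0,∞)) = {f ∈ L²([0,∞); dx) : f, f' ∈ AC([0,R]) for all R > 0; f(0₊) = 0; f'' ∈ L²([0,∞); dx)}, one has |f'(0₊)| ≤ 2^{-1/4} (∫₀^∞ (|f(x)|² + |f''(x)|²) dx)^{1/2}, and the constant 2^{-1/4} is best possible; equivalently, sup over 0 ≠ f ∈ H₀^{2,2}((0,∞)) of |f'(0₊)|² / (∫₀^∞ (|f|² + |f''|²) dx) = 2^{-1/2}. -/

import Mathlib

/-!
Put `κ = 2^{-1/2}` and `ψ₀(x) = e^{-κx} sin κx`. Its derivatives `ψ₁, ψ₂, ψ₃` decay like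
`e^{-κx}`, and `ψ₃' = -ψ₀` because `2κ² = 1`. Integrating by parts twice on `[0, R]` gives
`∫₀^R (f ψ₀ + f'' ψ₂) = f'(0) + f'(R) ψ₂(R) - f(R) ψ₃(R)`, using `f(0) = 0`, `ψ₀(0) = 0` and
`ψ₂(0) = -1`. As `R → ∞` the term `f'(R) ψ₂(R)` tends to `0` because `f'` grows at most linearly,
so `f ψ₃` has a limit at infinity; since `f ψ₃` is integrable, that limit is `0`. Hence
`f'(0) = ∫₀^∞ (f ψ₀ + f'' ψ₂)`, and Cauchy–Schwarz bounds it by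
`(∫₀^∞ (|ψ₀|² + |ψ₂|²))^{1/2} (∫₀^∞ (|f|² + |f''|²))^{1/2}`, where
`∫₀^∞ (|ψ₀|² + |ψ₂|²) = ∫₀^∞ e^{-2κx} dx = κ`. Equality holds for `f = ψ₀`, as `ψ₀'(0) = κ`.
-/

open MeasureTheory Set

/-- `f ∈ H₀^{2,2}((0,∞))`: `f ∈ L²([0,∞))`, `f, f'` absolutely continuous on every
`[0,R]` (encoded through the integral representations with data `f', f''`),
`f(0₊) = 0`, and `f'' ∈ L²([0,∞))`. -/
def MemH022 (f f' f'' : ℝ → ℂ) : Prop :=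
  f 0 = 0 ∧
  (∀ x : ℝ, 0 ≤ x → f x = ∫ t in (0 : ℝ)..x, f' t) ∧
  (∀ x : ℝ, 0 ≤ x → f' x = f' 0 + ∫ t in (0 : ℝ)..x, f'' t) ∧
  (∀ R : ℝ, 0 < R → IntegrableOn f' (Icc 0 R) volume) ∧
  (∀ R : ℝ, 0 < R → IntegrableOn f'' (Icc 0 R) volume) ∧
  MemLp f 2 (volume.restrict (Ici (0 : ℝ))) ∧
  MemLp f'' 2 (volume.restrict (Ici (0 : ℝ)))

open Filter Topology Real

section IntegrationByParts

variable {𝕜 : Type*} [RCLike 𝕜] {a b : ℝ}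

theorem integral_Ioc_mul_integral_Ioc_comm {g h : ℝ → 𝕜} (hg : IntegrableOn g (Ioc a b))
    (hh : IntegrableOn h (Ioc a b)) :
    ∫ t in Ioc a b, g t * ∫ s in Ioc t b, h s = ∫ s in Ioc a b, (∫ t in Ioc a s, g t) * h s := by
  set μ := volume.restrict (Ioc a b)
  set F : ℝ × ℝ → 𝕜 := {p | p.1 < p.2}.indicator fun p => g p.1 * h p.2
  have hF : Integrable F (μ.prod μ) :=
    (hg.mul_prod hh).indicator (measurableSet_lt measurable_fst measurable_snd)
  calc ∫ t in Ioc a b, g t * ∫ s in Ioc t b, h s = ∫ t, ∫ s, F (t, s) ∂μ ∂μ := by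
        refine setIntegral_congr_fun measurableSet_Ioc fun t ht => ?_
        have : (fun s => F (t, s)) = (Ioi t).indicator fun s => g t * h s := by
          ext s; simp [F, indicator_apply]
        rw [this, setIntegral_indicator measurableSet_Ioi, Ioc_inter_Ioi, sup_eq_right.2 ht.1.le,
          integral_const_mul]
    _ = ∫ s, ∫ t, F (t, s) ∂μ ∂μ := integral_integral_swap hF
    _ = ∫ s in Ioc a b, (∫ t in Ioc a s, g t) * h s := by
        refine setIntegral_congr_fun measurableSet_Ioc fun s hs => ?_
        have : (fun t => F (t, s)) = (Iio s).indicator fun t => g t * h s := by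
          ext t; simp [F, indicator_apply]
        have hIoo : Ioc a b ∩ Iio s = Ioo a s := by
          ext t; simp only [mem_inter_iff, mem_Ioc, mem_Iio, mem_Ioo]; grind
        rw [this, setIntegral_indicator measurableSet_Iio, hIoo, integral_mul_const,
          integral_Ioc_eq_integral_Ioo]

theorem continuousOn_Icc_of_eq_add_integral {F F' : ℝ → 𝕜} (hab : a ≤ b)
    (hF : ∀ x ∈ Icc a b, F x = F a + ∫ t in a..x, F' t) (hF' : IntegrableOn F' (Ioc a b)) :
    ContinuousOn F (Icc a b) := by
  have h := intervalIntegral.continuousOn_primitive_interval (μ := volume) (f := F')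
    (by rwa [uIcc_of_le hab, integrableOn_Icc_iff_integrableOn_Ioc])
  rw [uIcc_of_le hab] at h
  exact (continuousOn_const.add h).congr hF

theorem integral_Ioc_eq_sub_of_eq_add_integral {F F' : ℝ → 𝕜}
    (hF : ∀ x ∈ Icc a b, F x = F a + ∫ t in a..x, F' t) (hF' : IntegrableOn F' (Ioc a b))
    {s t : ℝ} (has : a ≤ s) (hst : s ≤ t) (htb : t ≤ b) :
    ∫ x in Ioc s t, F' x = F t - F s := by
  have hint : ∀ u ∈ Icc a b, IntervalIntegrable F' volume a u := fun u hu =>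
    (intervalIntegrable_iff_integrableOn_Ioc_of_le hu.1).2
      (hF'.mono_set (Ioc_subset_Ioc_right hu.2))
  have hs : s ∈ Icc a b := ⟨has, hst.trans htb⟩
  have ht : t ∈ Icc a b := ⟨has.trans hst, htb⟩
  rw [hF t ht, hF s hs, add_sub_add_left_eq_sub,
    intervalIntegral.integral_interval_sub_left (hint t ht) (hint s hs),
    intervalIntegral.integral_of_le hst]

theorem integral_deriv_mul_eq_sub_of_primitive {F F' G G' : ℝ → 𝕜} (hab : a ≤ b)
    (hF : ∀ x ∈ Icc a b, F x = F a + ∫ t in a..x, F' t)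
    (hG : ∀ x ∈ Icc a b, G x = G a + ∫ t in a..x, G' t)
    (hF' : IntegrableOn F' (Ioc a b)) (hG' : IntegrableOn G' (Ioc a b)) :
    ∫ x in a..b, F' x * G x = F b * G b - F a * G a - ∫ x in a..b, F x * G' x := by
  have hFs : ∀ s ∈ Ioc a b, ∫ t in Ioc a s, F' t = F s - F a := fun s hs =>
    integral_Ioc_eq_sub_of_eq_add_integral hF hF' le_rfl hs.1.le hs.2
  have hGt : ∀ t ∈ Ioc a b, ∫ s in Ioc t b, G' s = G b - G t := fun t ht =>
    integral_Ioc_eq_sub_of_eq_add_integral hG hG' ht.1.le ht.2 le_rfl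
  have hF'G : IntegrableOn (fun x => F' x * G x) (Ioc a b) :=
    hF'.mul_continuousOn_of_subset (continuousOn_Icc_of_eq_add_integral hab hG hG')
      measurableSet_Ioc isCompact_Icc Ioc_subset_Icc_self
  have hFG' : IntegrableOn (fun x => F x * G' x) (Ioc a b) :=
    hG'.continuousOn_mul_of_subset (continuousOn_Icc_of_eq_add_integral hab hF hF')
      isCompact_Icc measurableSet_Ioc Ioc_subset_Icc_self
  have hL : ∫ t in Ioc a b, F' t * ∫ s in Ioc t b, G' s
      = (F b - F a) * G b - ∫ x in Ioc a b, F' x * G x := by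
    rw [setIntegral_congr_fun measurableSet_Ioc fun t ht => by rw [hGt t ht, mul_sub],
      integral_sub (hF'.mul_const _) hF'G, integral_mul_const,
      integral_Ioc_eq_sub_of_eq_add_integral hF hF' le_rfl hab le_rfl]
  have hR : ∫ s in Ioc a b, (∫ t in Ioc a s, F' t) * G' s
      = (∫ x in Ioc a b, F x * G' x) - F a * (G b - G a) := by
    rw [setIntegral_congr_fun measurableSet_Ioc fun s hs => by rw [hFs s hs, sub_mul],
      integral_sub hFG' (hG'.const_mul _), integral_const_mul,
      integral_Ioc_eq_sub_of_eq_add_integral hG hG' le_rfl hab le_rfl]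
  have hswap := integral_Ioc_mul_integral_Ioc_comm hF' hG'
  rw [hL, hR] at hswap
  rw [intervalIntegral.integral_of_le hab, intervalIntegral.integral_of_le hab]
  linear_combination -hswap

end IntegrationByParts

theorem eq_zero_of_integrableOn_Ioi_of_tendsto {E : Type*} [NormedAddCommGroup E] {g : ℝ → E}
    {a : ℝ} {c : E} (hg : IntegrableOn g (Ioi a)) (hc : Tendsto g atTop (𝓝 c)) : c = 0 := by
  by_contra hc0
  have hε : 0 < ‖c‖ / 2 := by positivity
  obtain ⟨X, hX⟩ := eventually_atTop.1
    (hc.norm.eventually (lt_mem_nhds (half_lt_self (norm_pos_iff.2 hc0))))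
  refine (hg.measure_norm_ge_lt_top hε).ne (top_le_iff.1 ?_)
  calc ⊤ = volume (Ioi (max a X)) := volume_Ioi.symm
    _ ≤ volume ({x | ‖c‖ / 2 ≤ ‖g x‖} ∩ Ioi a) := measure_mono fun x hx =>
        ⟨(hX x (le_of_max_le_right hx.le)).le, (le_max_left a X).trans_lt hx⟩
    _ ≤ _ := Measure.le_restrict_apply _ _

theorem tendsto_add_mul_mul_exp_neg_atTop (A B : ℝ) {b : ℝ} (hb : 0 < b) :
    Tendsto (fun x => (A + B * x) * exp (-(b * x))) atTop (𝓝 0) := by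
  have h := ((tendsto_rpow_mul_exp_neg_mul_atTop_nhds_zero 0 b hb).const_mul A).add
    ((tendsto_rpow_mul_exp_neg_mul_atTop_nhds_zero 1 b hb).const_mul B)
  simp only [rpow_zero, rpow_one, mul_zero, add_zero] at h
  exact h.congr fun x => by ring_nf

theorem integral_Ici_exp_neg_mul {b : ℝ} (hb : 0 < b) :
    ∫ x in Ici (0 : ℝ), exp (-(b * x)) = b⁻¹ := by
  simp_rw [integral_Ici_eq_integral_Ioi, ← neg_mul]
  rw [integral_exp_mul_Ioi (neg_lt_zero.2 hb)]
  simp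

theorem integrableOn_Ici_exp_neg_mul {b : ℝ} (hb : 0 < b) :
    IntegrableOn (fun x => exp (-(b * x))) (Ici 0) := by
  simpa [integrableOn_Ici_iff_integrableOn_Ioi, neg_mul] using exp_neg_integrableOn_Ioi 0 hb

theorem memLp_two_of_norm_le_mul_exp_neg {E : Type*} [NormedAddCommGroup E] {ψ : ℝ → E} {C b : ℝ}
    (hb : 0 < b) (hψ : AEStronglyMeasurable ψ (volume.restrict (Ici 0)))
    (hle : ∀ x, ‖ψ x‖ ≤ C * exp (-(b * x))) : MemLp ψ 2 (volume.restrict (Ici 0)) := by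
  have hexp : MemLp (fun x => C * exp (-(b * x))) 2 (volume.restrict (Ici 0)) := by
    refine (memLp_two_iff_integrable_sq_norm (by fun_prop)).2 ?_
    refine ((integrableOn_Ici_exp_neg_mul (mul_pos two_pos hb)).const_mul (C ^ 2)).congr
      (Eventually.of_forall fun x => ?_)
    simp only [norm_mul, norm_eq_abs, abs_exp, mul_pow, sq_abs, ← exp_nat_mul]
    ring_nf
  exact hexp.of_le hψ (Eventually.of_forall fun x => (hle x).trans (le_abs_self _))

theorem norm_intervalIntegral_le_of_integrable_sq {E : Type*} [NormedAddCommGroup E]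
    [NormedSpace ℝ E] {g : ℝ → E}
    (hg : IntegrableOn (fun x => ‖g x‖ ^ 2) (Ici 0)) {R : ℝ} (hR : 0 ≤ R) :
    ‖∫ t in (0 : ℝ)..R, g t‖ ≤ (R + ∫ x in Ici (0 : ℝ), ‖g x‖ ^ 2) / 2 := by
  have hsq : IntegrableOn (fun x => ‖g x‖ ^ 2) (Ioc 0 R) := hg.mono_set fun x hx => hx.1.le
  have hone : IntegrableOn (fun _ => (1 : ℝ)) (Ioc 0 R) := integrableOn_const (by simp)
  calc ‖∫ t in (0 : ℝ)..R, g t‖ ≤ ∫ t in Ioc 0 R, ‖g t‖ := by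
        rw [intervalIntegral.integral_of_le hR]; exact norm_integral_le_integral_norm _
    _ ≤ ∫ t in Ioc 0 R, (1 + ‖g t‖ ^ 2) / 2 :=
        integral_mono_of_nonneg (Eventually.of_forall fun t => norm_nonneg _)
          ((hone.add hsq).div_const 2)
          (Eventually.of_forall fun t => by nlinarith [sq_nonneg (‖g t‖ - 1)])
    _ = (R + ∫ t in Ioc 0 R, ‖g t‖ ^ 2) / 2 := by
        rw [integral_div, integral_add hone hsq]
        simp [hR]
    _ ≤ (R + ∫ x in Ici (0 : ℝ), ‖g x‖ ^ 2) / 2 := by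
        gcongr
        · exact Eventually.of_forall fun x => by positivity
        · exact fun x hx => mem_Ici.2 hx.1.le

section CauchySchwarz

variable {α : Type*} [MeasurableSpace α] {μ : Measure α}

theorem memLp_two_sqrt_norm_sq_add_norm_sq {E F : Type*} [NormedAddCommGroup E]
    [NormedAddCommGroup F] {g₁ : α → E} {g₂ : α → F} (h₁ : MemLp g₁ 2 μ) (h₂ : MemLp g₂ 2 μ) :
    MemLp (fun x => √(‖g₁ x‖ ^ 2 + ‖g₂ x‖ ^ 2)) 2 μ := by
  refine (memLp_two_iff_integrable_sq_norm (continuous_sqrt.comp_aestronglyMeasurable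
    ((h₁.1.norm.pow 2).add (h₂.1.norm.pow 2)))).2 ?_
  refine (((memLp_two_iff_integrable_sq_norm h₁.1).1 h₁).add
    ((memLp_two_iff_integrable_sq_norm h₂.1).1 h₂)).congr (Eventually.of_forall fun x => ?_)
  change ‖g₁ x‖ ^ 2 + ‖g₂ x‖ ^ 2 = ‖√(‖g₁ x‖ ^ 2 + ‖g₂ x‖ ^ 2)‖ ^ 2
  rw [norm_of_nonneg (sqrt_nonneg _), sq_sqrt (by positivity)]

theorem norm_integral_mul_add_mul_le {𝕜 : Type*} [RCLike 𝕜] {g₁ g₂ h₁ h₂ : α → 𝕜}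
    (hg₁ : MemLp g₁ 2 μ) (hg₂ : MemLp g₂ 2 μ) (hh₁ : MemLp h₁ 2 μ) (hh₂ : MemLp h₂ 2 μ) :
    ‖∫ x, (g₁ x * h₁ x + g₂ x * h₂ x) ∂μ‖ ≤
      √(∫ x, (‖g₁ x‖ ^ 2 + ‖g₂ x‖ ^ 2) ∂μ) * √(∫ x, (‖h₁ x‖ ^ 2 + ‖h₂ x‖ ^ 2) ∂μ) := by
  set U := fun x => √(‖g₁ x‖ ^ 2 + ‖g₂ x‖ ^ 2)
  set V := fun x => √(‖h₁ x‖ ^ 2 + ‖h₂ x‖ ^ 2)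
  have hU := memLp_two_sqrt_norm_sq_add_norm_sq hg₁ hg₂
  have hV := memLp_two_sqrt_norm_sq_add_norm_sq hh₁ hh₂
  have hpt : ∀ x, ‖g₁ x * h₁ x + g₂ x * h₂ x‖ ≤ U x * V x := fun x => by
    refine (norm_add_le _ _).trans ?_
    simpa [norm_mul, Fin.sum_univ_two] using
      sum_mul_le_sqrt_mul_sqrt Finset.univ ![‖g₁ x‖, ‖g₂ x‖] ![‖h₁ x‖, ‖h₂ x‖]
  have hsq : ∀ {u v : α → 𝕜} (x : α), √(‖u x‖ ^ 2 + ‖v x‖ ^ 2) ^ (2 : ℝ) = ‖u x‖ ^ 2 + ‖v x‖ ^ 2 :=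
    fun x => by rw [rpow_two, sq_sqrt (by positivity)]
  calc ‖∫ x, (g₁ x * h₁ x + g₂ x * h₂ x) ∂μ‖
      ≤ ∫ x, ‖g₁ x * h₁ x + g₂ x * h₂ x‖ ∂μ := norm_integral_le_integral_norm _
    _ ≤ ∫ x, U x * V x ∂μ := integral_mono_of_nonneg (Eventually.of_forall fun x => norm_nonneg _)
        (hU.integrable_mul hV) (Eventually.of_forall hpt)
    _ ≤ (∫ x, U x ^ (2 : ℝ) ∂μ) ^ (1 / 2 : ℝ) * (∫ x, V x ^ (2 : ℝ) ∂μ) ^ (1 / 2 : ℝ) :=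
        integral_mul_le_Lp_mul_Lq_of_nonneg Real.HolderConjugate.two_two
          (Eventually.of_forall fun x => sqrt_nonneg _)
          (Eventually.of_forall fun x => sqrt_nonneg _) (by simpa using hU) (by simpa using hV)
    _ = _ := by simp only [U, V, hsq, ← sqrt_eq_rpow]

end CauchySchwarz

noncomputable def dampedOsc (ω α β : ℝ) (x : ℝ) : ℂ :=
  (exp (-(ω * x)) * (α * cos (ω * x) + β * sin (ω * x)) : ℝ)

section DampedOsc

variable (ω α β : ℝ)

theorem hasDerivAt_dampedOsc (x : ℝ) :
    HasDerivAt (dampedOsc ω α β) (dampedOsc ω (ω * (β - α)) (-(ω * (α + β))) x) x := by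
  have hlin : HasDerivAt (fun y => ω * y) ω x := by simpa using (hasDerivAt_id x).const_mul ω
  have h := hlin.neg.exp.mul ((hlin.cos.const_mul α).add (hlin.sin.const_mul β))
  refine (h.congr_deriv ?_).ofReal_comp
  simp only [Pi.neg_apply, Pi.add_apply]
  ring

theorem continuous_dampedOsc : Continuous (dampedOsc ω α β) := by
  unfold dampedOsc; fun_prop

theorem norm_dampedOsc_le (x : ℝ) : ‖dampedOsc ω α β x‖ ≤ (|α| + |β|) * exp (-(ω * x)) := by
  rw [dampedOsc, Complex.norm_real, norm_mul, norm_eq_abs, abs_exp, mul_comm]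
  gcongr
  calc |α * cos (ω * x) + β * sin (ω * x)| ≤ |α| * |cos (ω * x)| + |β| * |sin (ω * x)| := by
        rw [← abs_mul, ← abs_mul]; exact abs_add_le _ _
    _ ≤ |α| * 1 + |β| * 1 := by gcongr <;> simp [abs_cos_le_one, abs_sin_le_one]
    _ = |α| + |β| := by ring

theorem memLp_dampedOsc (hω : 0 < ω) :
    MemLp (dampedOsc ω α β) 2 (volume.restrict (Ici 0)) :=
  memLp_two_of_norm_le_mul_exp_neg hω (continuous_dampedOsc ω α β).aestronglyMeasurable
    (norm_dampedOsc_le ω α β)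

theorem dampedOsc_eq_add_integral {α' β' : ℝ} (hα' : ω * (β - α) = α')
    (hβ' : -(ω * (α + β)) = β') (a x : ℝ) :
    dampedOsc ω α β x = dampedOsc ω α β a + ∫ t in a..x, dampedOsc ω α' β' t := by
  subst hα' hβ'
  rw [intervalIntegral.integral_eq_sub_of_hasDerivAt (fun t _ => hasDerivAt_dampedOsc ω α β t)
    ((continuous_dampedOsc _ _ _).intervalIntegrable _ _)]
  ring

end DampedOsc

namespace MemH022

noncomputable def κ : ℝ := 2 ^ (-(1 / 2 : ℝ))

theorem κ_pos : 0 < κ := rpow_pos_of_pos two_pos _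

theorem two_mul_κ_sq : 2 * κ ^ 2 = 1 := by
  rw [κ, ← rpow_natCast, ← rpow_mul two_pos.le]
  norm_num

theorem sqrt_κ : √κ = 2 ^ (-(1 / 4 : ℝ)) := by
  rw [κ, sqrt_eq_rpow, ← rpow_mul two_pos.le]
  norm_num

noncomputable def ψ₀ : ℝ → ℂ := dampedOsc κ 0 1
noncomputable def ψ₁ : ℝ → ℂ := dampedOsc κ κ (-κ)
noncomputable def ψ₂ : ℝ → ℂ := dampedOsc κ (-1) 0
noncomputable def ψ₃ : ℝ → ℂ := dampedOsc κ κ κ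

theorem ψ₀_eq_add_integral (a x : ℝ) : ψ₀ x = ψ₀ a + ∫ t in a..x, ψ₁ t :=
  dampedOsc_eq_add_integral _ _ _ (by ring) (by ring) a x

theorem ψ₁_eq_add_integral (a x : ℝ) : ψ₁ x = ψ₁ a + ∫ t in a..x, ψ₂ t :=
  dampedOsc_eq_add_integral _ _ _ (by linear_combination -two_mul_κ_sq) (by ring) a x

theorem ψ₂_eq_add_integral (a x : ℝ) : ψ₂ x = ψ₂ a + ∫ t in a..x, ψ₃ t :=
  dampedOsc_eq_add_integral _ _ _ (by ring) (by ring) a x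

theorem ψ₃_eq_add_integral (a x : ℝ) : ψ₃ x = ψ₃ a + ∫ t in a..x, -ψ₀ t := by
  have hneg : dampedOsc κ 0 (-1) = -ψ₀ := by ext; simp [ψ₀, dampedOsc]
  have h := dampedOsc_eq_add_integral κ κ κ (α' := 0) (β' := -1) (by ring)
    (by linear_combination -two_mul_κ_sq) a x
  rw [hneg] at h
  exact h

theorem memLp_ψ₀ : MemLp ψ₀ 2 (volume.restrict (Ici 0)) := memLp_dampedOsc _ _ _ κ_pos
theorem memLp_ψ₂ : MemLp ψ₂ 2 (volume.restrict (Ici 0)) := memLp_dampedOsc _ _ _ κ_pos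
theorem memLp_ψ₃ : MemLp ψ₃ 2 (volume.restrict (Ici 0)) := memLp_dampedOsc _ _ _ κ_pos

@[simp] theorem ψ₀_zero : ψ₀ 0 = 0 := by simp [ψ₀, dampedOsc]
@[simp] theorem ψ₁_zero : ψ₁ 0 = κ := by simp [ψ₁, dampedOsc]
@[simp] theorem ψ₂_zero : ψ₂ 0 = -1 := by simp [ψ₂, dampedOsc]

theorem norm_ψ₀_sq_add_norm_ψ₂_sq (x : ℝ) :
    ‖ψ₀ x‖ ^ 2 + ‖ψ₂ x‖ ^ 2 = exp (-(2 * κ * x)) := by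
  simp only [ψ₀, ψ₂, dampedOsc, Complex.norm_real, norm_eq_abs, sq_abs]
  have h : exp (-(2 * κ * x)) = exp (-(κ * x)) ^ 2 := by rw [← exp_nat_mul]; ring_nf
  rw [h]
  linear_combination exp (-(κ * x)) ^ 2 * sin_sq_add_cos_sq (κ * x)

theorem integral_norm_ψ₀_sq_add_norm_ψ₂_sq :
    ∫ x in Ici (0 : ℝ), (‖ψ₀ x‖ ^ 2 + ‖ψ₂ x‖ ^ 2) = κ := by
  simp_rw [norm_ψ₀_sq_add_norm_ψ₂_sq, integral_Ici_exp_neg_mul (mul_pos two_pos κ_pos)]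
  exact inv_eq_of_mul_eq_one_right (by linear_combination two_mul_κ_sq)

theorem norm_ψ₁_zero_sq_div :
    ‖ψ₁ 0‖ ^ 2 / ∫ x in Ici (0 : ℝ), (‖ψ₀ x‖ ^ 2 + ‖ψ₂ x‖ ^ 2) = κ := by
  rw [integral_norm_ψ₀_sq_add_norm_ψ₂_sq, ψ₁_zero, Complex.norm_real, norm_of_nonneg κ_pos.le, sq,
    mul_div_cancel_right₀ _ κ_pos.ne']

theorem ψ₀_not_ae_eq_zero : ¬ ψ₀ =ᵐ[volume.restrict (Ici (0 : ℝ))] 0 := by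
  intro h
  have hzero := Measure.eqOn_of_ae_eq h (continuous_dampedOsc _ _ _).continuousOn
    continuousOn_const (by rw [interior_Ici, closure_Ioi])
  have hκ1 : κ < 1 := rpow_lt_one_of_one_lt_of_neg one_lt_two (by norm_num)
  have hsin : 0 < sin κ := sin_pos_of_pos_of_lt_pi κ_pos (hκ1.trans (by linarith [pi_gt_three]))
  have := hzero (mem_Ici.2 zero_le_one)
  simp only [ψ₀, dampedOsc, Pi.zero_apply, Complex.ofReal_eq_zero, mul_one] at this
  simp [hsin.ne'] at this

theorem memH022_ψ₀ : MemH022 ψ₀ ψ₁ ψ₂ := by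
  refine ⟨ψ₀_zero, fun x _ => ?_, fun x _ => ψ₁_eq_add_integral 0 x,
    fun R _ => (continuous_dampedOsc _ _ _).integrableOn_Icc,
    fun R _ => (continuous_dampedOsc _ _ _).integrableOn_Icc, memLp_ψ₀, memLp_ψ₂⟩
  simpa using ψ₀_eq_add_integral 0 x

section

variable {f f' f'' : ℝ → ℂ}

theorem intervalIntegral_mul_ψ₀_add_mul_ψ₂ (hm : MemH022 f f' f'') {R : ℝ} (hR : 0 < R) :
    ∫ x in (0 : ℝ)..R, (f x * ψ₀ x + f'' x * ψ₂ x) = f' 0 + f' R * ψ₂ R - f R * ψ₃ R := by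
  obtain ⟨hf0, hf, hf', hf'i, hf''i, hfL2, hf''L2⟩ := hm
  have hIoc : Ioc 0 R ⊆ Ici (0 : ℝ) := fun x hx => hx.1.le
  have hint : ∀ {g ψ : ℝ → ℂ}, MemLp g 2 (volume.restrict (Ici 0)) →
      MemLp ψ 2 (volume.restrict (Ici 0)) → IntervalIntegrable (fun x => g x * ψ x) volume 0 R :=
    fun hg hψ => (intervalIntegrable_iff_integrableOn_Ioc_of_le hR.le).2
      (IntegrableOn.mono_set (hg.integrable_mul hψ) hIoc)
  have hf''ψ₂ := integral_deriv_mul_eq_sub_of_primitive hR.le (fun x hx => hf' x hx.1)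
    (fun x _ => ψ₂_eq_add_integral 0 x) ((hf''i R hR).mono_set Ioc_subset_Icc_self)
    (continuous_dampedOsc κ κ κ).integrableOn_Ioc
  have hf'ψ₃ := integral_deriv_mul_eq_sub_of_primitive (F := f) hR.le
    (fun x hx => by rw [hf0, zero_add]; exact hf x hx.1) (fun x _ => ψ₃_eq_add_integral 0 x)
    ((hf'i R hR).mono_set Ioc_subset_Icc_self) (continuous_dampedOsc κ 0 1).neg.integrableOn_Ioc
  rw [intervalIntegral.integral_add (hint hfL2 memLp_ψ₀) (hint hf''L2 memLp_ψ₂), hf''ψ₂, hf'ψ₃]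
  simp only [mul_neg, intervalIntegral.integral_neg, hf0, ψ₂_zero]
  ring

theorem tendsto_deriv_mul_ψ₂ (hm : MemH022 f f' f'') :
    Tendsto (fun R => f' R * ψ₂ R) atTop (𝓝 0) := by
  obtain ⟨-, -, hf', -, -, -, hf''L2⟩ := hm
  have hsq := (memLp_two_iff_integrable_sq_norm hf''L2.1).1 hf''L2
  refine squeeze_zero_norm' ?_ (tendsto_add_mul_mul_exp_neg_atTop
    (‖f' 0‖ + (∫ x in Ici (0 : ℝ), ‖f'' x‖ ^ 2) / 2) (1 / 2) κ_pos)
  filter_upwards [eventually_ge_atTop 0] with R hR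
  rw [norm_mul]
  refine mul_le_mul ?_ (by simpa [ψ₂] using norm_dampedOsc_le κ (-1) 0 R) (norm_nonneg _)
    (by positivity)
  rw [hf' R hR]
  linarith [norm_add_le (f' 0) (∫ t in (0 : ℝ)..R, f'' t),
    norm_intervalIntegral_le_of_integrable_sq hsq hR]

theorem integral_mul_ψ₀_add_mul_ψ₂ (hm : MemH022 f f' f'') :
    ∫ x in Ici (0 : ℝ), (f x * ψ₀ x + f'' x * ψ₂ x) = f' 0 := by
  have ⟨_, _, _, _, _, hfL2, hf''L2⟩ := hm
  have hint : IntegrableOn (fun x => f x * ψ₀ x + f'' x * ψ₂ x) (Ioi 0) :=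
    IntegrableOn.mono_set ((hfL2.integrable_mul memLp_ψ₀).add (hf''L2.integrable_mul memLp_ψ₂))
      Ioi_subset_Ici_self
  have hlim := intervalIntegral_tendsto_integral_Ioi 0 hint tendsto_id
  have hbdry : Tendsto (fun R => f R * ψ₃ R) atTop
      (𝓝 (f' 0 + 0 - ∫ x in Ioi (0 : ℝ), (f x * ψ₀ x + f'' x * ψ₂ x))) := by
    refine ((tendsto_const_nhds.add hm.tendsto_deriv_mul_ψ₂).sub hlim).congr' ?_
    filter_upwards [eventually_gt_atTop 0] with R hR
    rw [id, hm.intervalIntegral_mul_ψ₀_add_mul_ψ₂ hR]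
    ring
  have h := eq_zero_of_integrableOn_Ioi_of_tendsto
    (IntegrableOn.mono_set (hfL2.integrable_mul memLp_ψ₃) Ioi_subset_Ici_self) hbdry
  rw [integral_Ici_eq_integral_Ioi]
  linear_combination -h

theorem norm_deriv_zero_le (hm : MemH022 f f' f'') :
    ‖f' 0‖ ≤ √κ * √(∫ x in Ici (0 : ℝ), (‖f x‖ ^ 2 + ‖f'' x‖ ^ 2)) := by
  have ⟨_, _, _, _, _, hfL2, hf''L2⟩ := hm
  rw [← hm.integral_mul_ψ₀_add_mul_ψ₂, ← integral_norm_ψ₀_sq_add_norm_ψ₂_sq, mul_comm]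
  exact norm_integral_mul_add_mul_le hfL2 hf''L2 memLp_ψ₀ memLp_ψ₂

theorem norm_deriv_zero_sq_div_le (hm : MemH022 f f' f'') :
    ‖f' 0‖ ^ 2 / ∫ x in Ici (0 : ℝ), (‖f x‖ ^ 2 + ‖f'' x‖ ^ 2) ≤ κ := by
  have hD : 0 ≤ ∫ x in Ici (0 : ℝ), (‖f x‖ ^ 2 + ‖f'' x‖ ^ 2) :=
    integral_nonneg fun x => by positivity
  refine div_le_of_le_mul₀ hD κ_pos.le ?_
  calc ‖f' 0‖ ^ 2 ≤ (√κ * √(∫ x in Ici (0 : ℝ), (‖f x‖ ^ 2 + ‖f'' x‖ ^ 2))) ^ 2 :=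
        pow_le_pow_left₀ (norm_nonneg _) hm.norm_deriv_zero_le 2
    _ = κ * ∫ x in Ici (0 : ℝ), (‖f x‖ ^ 2 + ‖f'' x‖ ^ 2) := by
        rw [mul_pow, sq_sqrt κ_pos.le, sq_sqrt hD]

end

end MemH022

/-- Remark 4.9 (i) of Gesztesy–Kalton–Makarov–Tsekanovskii.
For every `f ∈ H₀^{2,2}((0,∞))` one has
`|f'(0₊)| ≤ 2^{-1/4} (∫₀^∞ (|f|² + |f''|²) dx)^{1/2}`, and the constant `2^{-1/4}` is
best possible: `sup_{0 ≠ f} |f'(0₊)|²/∫₀^∞(|f|²+|f''|²) dx = 2^{-1/2}`. -/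
theorem statement17 :
    (∀ f f' f'' : ℝ → ℂ, MemH022 f f' f'' →
      ‖f' 0‖ ≤ (2 : ℝ) ^ (-(1/4 : ℝ)) *
        Real.sqrt (∫ x in Ici (0 : ℝ), (‖f x‖ ^ 2 + ‖f'' x‖ ^ 2))) ∧
    IsLUB {r : ℝ | ∃ f f' f'' : ℝ → ℂ, MemH022 f f' f'' ∧
        ¬ (f =ᵐ[volume.restrict (Ici (0 : ℝ))] 0) ∧
        r = ‖f' 0‖ ^ 2 / ∫ x in Ici (0 : ℝ), (‖f x‖ ^ 2 + ‖f'' x‖ ^ 2)}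
      ((2 : ℝ) ^ (-(1/2 : ℝ))) := by
  refine ⟨fun f f' f'' hm => MemH022.sqrt_κ ▸ hm.norm_deriv_zero_le, ?_, fun b hb => hb ?_⟩
  · rintro r ⟨f, f', f'', hm, -, rfl⟩
    exact hm.norm_deriv_zero_sq_div_le
  · exact ⟨_, _, _, MemH022.memH022_ψ₀, MemH022.ψ₀_not_ae_eq_zero,
      MemH022.norm_ψ₁_zero_sq_div.symm⟩
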